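/- Let 0 < s_1 < s_2 < ... < s_K and let P = {(σ(θ_0+θ_1 s_1), ..., σ(θ_0+θ_1 s_K)) : (θ_0,θ_1) ∈ ℝ^2} ⊂ [0,1]^K, where σ is the logistic function. Then the closed convex hull of P equals the closed convex hull of the set M of vectors (ν_1,...,ν_K) ∈ {0,1}^K whose coordinates are either nondecreasing or nonincreasing. -/

import Mathlib

noncomputable def logistic (x : ℝ) : ℝ := Real.exp x / (1 + Real.exp x)

/-!
A logistic vector `i ↦ σ(θ₀ + θ₁ sᵢ)` is monotone (or antitone) with values in `[0, 1]`, and any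
such vector `v` is the average over `t ∈ (0, 1)` of the monotone (or antitone) 0-1 vectors
`i ↦ 𝟙[t < vᵢ]` (layer-cake formula); as these form a finite set, `v` lies in their convex hull.
Conversely a monotone 0-1 vector `ν` jumps between two consecutive `sᵢ`, so some affine function
`a + b sᵢ` is positive exactly where `ν = 1`, and `σ(n (a + b sᵢ)) → νᵢ` as `n → ∞`.
-/

open Set Filter Topology MeasureTheory

lemma logistic_eq_sigmoid : logistic = Real.sigmoid := by
  funext x
  rw [logistic, Real.sigmoid_def, Real.exp_neg]
  field_simp
  ring

section LogisticVectors

variable {ι : Type*}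

def monotoneZeroOne (ι : Type*) [Preorder ι] : Set (ι → ℝ) :=
  {ν | (∀ i, ν i = 0 ∨ ν i = 1) ∧ (Monotone ν ∨ Antitone ν)}

def logisticVectors (s : ι → ℝ) : Set (ι → ℝ) :=
  range fun θ : ℝ × ℝ => fun i => logistic (θ.1 + θ.2 * s i)

theorem mem_convexHull_range_indicator_Iio [Fintype ι] {v : ι → ℝ} (h0 : ∀ i, 0 ≤ v i)
    (h1 : ∀ i, v i ≤ 1) :
    v ∈ convexHull ℝ (range fun t : ℝ => fun i => (Iio (v i)).indicator (1 : ℝ → ℝ) t) := by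
  set χ : ℝ → ι → ℝ := fun t i => (Iio (v i)).indicator 1 t
  have hfinite : (range χ).Finite := by
    refine (Set.Finite.pi (t := fun _ => ({0, 1} : Set ℝ)) fun _ => by simp).subset ?_
    rintro _ ⟨t, rfl⟩ i -
    by_cases ht : t < v i <;> simp [χ, ht]
  let μ : Measure ℝ := volume.restrict (Ioo 0 1)
  have : IsProbabilityMeasure μ := ⟨by simp [μ]⟩
  have hint : ∀ i, Integrable (fun t => χ t i) μ := fun i =>
    (integrable_const (1 : ℝ)).indicator measurableSet_Iio
  have hmem := (convex_convexHull ℝ (range χ)).integral_mem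
    (hfinite.isCompact_convexHull ℝ).isClosed (ae_of_all μ fun t => subset_convexHull ℝ _ ⟨t, rfl⟩)
    (integrable_pi_iff.2 hint)
  convert hmem using 1
  funext i
  rw [eval_integral hint, integral_indicator_one measurableSet_Iio, Measure.real_def,
    Measure.restrict_apply measurableSet_Iio, Iio_inter_Ioo, min_eq_left (h1 i), Real.volume_Ioo,
    sub_zero, ENNReal.toReal_ofReal (h0 i)]

theorem mem_convexHull_monotoneZeroOne [Fintype ι] [Preorder ι] {v : ι → ℝ}
    (hv : Monotone v ∨ Antitone v) (h0 : ∀ i, 0 ≤ v i) (h1 : ∀ i, v i ≤ 1) :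
    v ∈ convexHull ℝ (monotoneZeroOne ι) := by
  refine convexHull_mono ?_ (mem_convexHull_range_indicator_Iio h0 h1)
  rintro _ ⟨t, rfl⟩
  refine ⟨fun i => by by_cases ht : t < v i <;> simp [ht], hv.imp ?_ ?_⟩ <;>
    exact fun hv i j hij => indicator_le_indicator_of_subset (Iio_subset_Iio (hv hij))
      (fun _ => zero_le_one) t

theorem logisticVectors_subset_convexHull_monotoneZeroOne [Fintype ι] [Preorder ι] {s : ι → ℝ}
    (hs : Monotone s) : logisticVectors s ⊆ convexHull ℝ (monotoneZeroOne ι) := by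
  rintro _ ⟨⟨a, b⟩, rfl⟩
  simp only [logistic_eq_sigmoid]
  refine mem_convexHull_monotoneZeroOne ?_ (fun _ => Real.sigmoid_nonneg _)
    (fun _ => Real.sigmoid_le_one _)
  rcases le_total 0 b with hb | hb
  · exact Or.inl fun i j hij => Real.sigmoid_le (by nlinarith [hs hij])
  · exact Or.inr fun i j hij => Real.sigmoid_le (by nlinarith [hs hij])

theorem exists_between_of_forall_lt [Fintype ι] (f : ι → ℝ) (p : ι → Prop)
    (h : ∀ i j, ¬p i → p j → f i < f j) : ∃ t, ∀ i, (¬p i → f i < t) ∧ (p i → t < f i) := by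
  classical
  obtain ⟨t, hlo, hhi⟩ := Order.exists_between_finsets
    ((Finset.univ.filter (¬p ·)).image f) ((Finset.univ.filter p).image f) (by
      simp only [Finset.mem_image, Finset.mem_filter, Finset.mem_univ, true_and]
      rintro _ ⟨i, hi, rfl⟩ _ ⟨j, hj, rfl⟩
      exact h i j hi hj)
  exact ⟨t, fun i => ⟨fun hi => hlo _ (Finset.mem_image_of_mem f (by simpa)),
    fun hi => hhi _ (Finset.mem_image_of_mem f (by simpa))⟩⟩

theorem mem_closure_logisticVectors (s : ι → ℝ) {ν : ι → ℝ} {a b : ℝ}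
    (h01 : ∀ i, ν i = 0 ∨ ν i = 1) (h0 : ∀ i, ν i = 0 → a + b * s i < 0)
    (h1 : ∀ i, ν i = 1 → 0 < a + b * s i) : ν ∈ closure (logisticVectors s) := by
  have hlim : Tendsto (fun n : ℝ => fun i => logistic (n * a + n * b * s i)) atTop (𝓝 ν) := by
    refine tendsto_pi_nhds.2 fun i => ?_
    have hscale : (fun n : ℝ => logistic (n * a + n * b * s i)) =
        Real.sigmoid ∘ fun n => n * (a + b * s i) := by
      funext n
      rw [Function.comp_apply, logistic_eq_sigmoid, mul_add, mul_assoc]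
    rw [hscale]
    rcases h01 i with hi | hi <;> rw [hi]
    · exact Real.tendsto_sigmoid_atBot.comp (tendsto_id.atTop_mul_const_of_neg (h0 i hi))
    · exact Real.tendsto_sigmoid_atTop.comp (tendsto_id.atTop_mul_const (h1 i hi))
  exact mem_closure_of_tendsto hlim (Eventually.of_forall fun n => ⟨(n * a, n * b), rfl⟩)

theorem monotoneZeroOne_subset_closure_logisticVectors [Fintype ι] [LinearOrder ι] {s : ι → ℝ}
    (hs : StrictMono s) : monotoneZeroOne ι ⊆ closure (logisticVectors s) := by
  rintro ν ⟨h01, hν⟩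
  obtain ⟨b, hb⟩ : ∃ b : ℝ, ∀ i j, ν i = 0 → ν j = 1 → b * s i < b * s j := by
    rcases hν with hν | hν
    · refine ⟨1, fun i j hi hj => ?_⟩
      have hij : i < j := lt_of_not_ge fun hji => (hν hji).not_gt (by simp [hi, hj])
      simpa using hs hij
    · refine ⟨-1, fun i j hi hj => ?_⟩
      have hji : j < i := lt_of_not_ge fun hij => (hν hij).not_gt (by simp [hi, hj])
      simpa using hs hji
  obtain ⟨t, ht⟩ := exists_between_of_forall_lt (fun i => b * s i) (fun i => ν i = 1)
    fun i j hi hj => hb i j ((h01 i).resolve_right hi) hj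
  refine mem_closure_logisticVectors s (a := -t) (b := b) h01 (fun i hi => ?_) (fun i hi => ?_)
  · linarith [(ht i).1 (by simp [hi])]
  · linarith [(ht i).2 hi]

end LogisticVectors

theorem closed_convex_hull_logistic_eq_monotone01_general
    {K : ℕ} (s : Fin K → ℝ) (hs : StrictMono s)
    (P M : Set (Fin K → ℝ))
    (hP : P = Set.range (fun θ : ℝ × ℝ => fun i => logistic (θ.1 + θ.2 * s i)))
    (hM : M = {ν | (∀ i, ν i = 0 ∨ ν i = 1) ∧ (Monotone ν ∨ Antitone ν)}) :
    closure (convexHull ℝ P) = closure (convexHull ℝ M) := by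
  change P = logisticVectors s at hP
  change M = monotoneZeroOne (Fin K) at hM
  subst hP hM
  simp only [← closedConvexHull_eq_closure_convexHull]
  apply subset_antisymm <;>
    refine closedConvexHull_min ?_ convex_closedConvexHull isClosed_closedConvexHull
  · exact (logisticVectors_subset_convexHull_monotoneZeroOne hs.monotone).trans
      convexHull_subset_closedConvexHull
  · exact (monotoneZeroOne_subset_closure_logisticVectors hs).trans closure_subset_closedConvexHull

/-- For `0 < s₁ < ⋯ < s_K`, the closed convex hull of the set of logistic probability
vectors `(σ(θ₀+θ₁s₁), …, σ(θ₀+θ₁s_K))` equals the closed convex hull of the set of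
monotone (nondecreasing or nonincreasing) 0-1 vectors. -/
theorem closed_convex_hull_logistic_eq_monotone01
    {K : ℕ} (s : Fin K → ℝ) (hs : StrictMono s) (hspos : ∀ i, 0 < s i)
    (P M : Set (Fin K → ℝ))
    (hP : P = Set.range (fun θ : ℝ × ℝ => fun i => logistic (θ.1 + θ.2 * s i)))
    (hM : M = {ν | (∀ i, ν i = 0 ∨ ν i = 1) ∧ (Monotone ν ∨ Antitone ν)}) :
    closure (convexHull ℝ P) = closure (convexHull ℝ M) :=
  closed_convex_hull_logistic_eq_monotone01_general s hs P M hP hM
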